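/- arXiv:1101.3468 — 2 statements merged into one kernel-verified Lean document; each statement's English description precedes it below -/
import Mathlib

section
/- Let R be the closed rectangle [0, 2+4r] × [0, 1+3r] with r = 2/√3 − 1. In any packing of unit disks in the plane, there exists a hole (a closed disk of radius r disjoint from the interiors of all packing disks) contained in R. -/
/-!
Put `R = 1 + r = 2 / √3` and let `m` be the centre of the rectangle. If every packing centre is
at distance `≥ R` from `m`, the hole about `m` fits. Otherwise some centre `c` lies within `R`
of `m`. On the circle of radius `R` about `c`, every arc of angle `π / 3` carries the centre of a
hole: three points pairwise `2` apart do not fit in a ball of radius `2 / √3`, so the arc would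
be blocked by a single other disk, and a disk at distance `≥ 2` from `c` cannot block both ends
of a chord of length `R`. Choosing the arc on the side of `c` facing `m`, at a height where
the circle stays within `R / 2` of `m`, puts that hole inside the rectangle.
-/

noncomputable section

abbrev E2 := EuclideanSpace ℝ (Fin 2)

def pt (x y : ℝ) : E2 := WithLp.toLp 2 ![x, y]

open Real Set Metric
open scoped RealInnerProductSpace

section InnerProductSpace

variable {F : Type*} [NormedAddCommGroup F] [InnerProductSpace ℝ F] {R : ℝ}

lemma norm_sub_sq_add_norm_sub_sq_add_norm_sub_sq (a b c : F) :
    ‖a - b‖ ^ 2 + ‖b - c‖ ^ 2 + ‖c - a‖ ^ 2 + ‖a + b + c‖ ^ 2 =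
      3 * (‖a‖ ^ 2 + ‖b‖ ^ 2 + ‖c‖ ^ 2) := by
  rw [norm_sub_sq_real, norm_sub_sq_real, norm_sub_sq_real, norm_add_sq_real, norm_add_sq_real,
    inner_add_left, real_inner_comm a c]
  ring

lemma false_of_three_separated_of_dist_le {p x y z : F} (hR : R ^ 2 ≤ 4 / 3)
    (hxy : 2 ≤ dist x y) (hyz : 2 ≤ dist y z) (hzx : 2 ≤ dist z x)
    (hx : dist x p < R) (hy : dist y p ≤ R) (hz : dist z p ≤ R) : False := by
  have key := norm_sub_sq_add_norm_sub_sq_add_norm_sub_sq (x - p) (y - p) (z - p)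
  simp only [sub_sub_sub_cancel_right, ← dist_eq_norm] at key
  have hx' : dist x p ^ 2 < R ^ 2 := pow_lt_pow_left₀ hx dist_nonneg two_ne_zero
  have hy' : dist y p ^ 2 ≤ R ^ 2 := pow_le_pow_left₀ dist_nonneg hy 2
  have hz' : dist z p ^ 2 ≤ R ^ 2 := pow_le_pow_left₀ dist_nonneg hz 2
  -- by `key` the squared pairwise distances sum to less than `3 * (3 * R ^ 2) ≤ 12`
  nlinarith [pow_le_pow_left₀ zero_le_two hxy 2, pow_le_pow_left₀ zero_le_two hyz 2,
    pow_le_pow_left₀ zero_le_two hzx 2, sq_nonneg ‖x - p + (y - p) + (z - p)‖]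

lemma false_of_dist_lt_chord_endpoints {x p q y : F} (hR : R ^ 2 ≤ 4 / 3)
    (hp : dist p x = R) (hq : dist q x = R) (hpq : R ≤ dist p q) (hy : 2 ≤ dist y x)
    (hyp : dist y p < R) (hyq : dist y q < R) : False := by
  set a := p - x
  set b := q - x
  set w := y - x
  have ha : ‖a‖ = R := by rw [← dist_eq_norm, hp]
  have hb : ‖b‖ = R := by rw [← dist_eq_norm, hq]
  have hab : R ≤ ‖a - b‖ := by rwa [sub_sub_sub_cancel_right, ← dist_eq_norm]
  have hwa : ‖w - a‖ < R := by rwa [sub_sub_sub_cancel_right, ← dist_eq_norm]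
  have hwb : ‖w - b‖ < R := by rwa [sub_sub_sub_cancel_right, ← dist_eq_norm]
  have hw : 2 ≤ ‖w‖ := by rwa [← dist_eq_norm]
  have hR0 : 0 ≤ R := ha ▸ norm_nonneg a
  -- parallelogram law: `‖a + b‖ ≤ 2`; but `‖w‖ ^ 2 < ⟪w, a + b⟫ ≤ 2 * ‖w‖` by `hwa`, `hwb`
  have hsum : ‖a + b‖ ^ 2 ≤ 4 := by
    have := norm_add_sq_real a b
    have := norm_sub_sq_real a b
    nlinarith [pow_le_pow_left₀ hR0 hab 2]
  have hsum' : ‖a + b‖ ≤ 2 := by nlinarith [norm_nonneg (a + b)]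
  have hwa' := norm_sub_sq_real w a
  have hwb' := norm_sub_sq_real w b
  have hcs : ⟪w, a + b⟫ ≤ ‖w‖ * ‖a + b‖ := real_inner_le_norm _ _
  rw [inner_add_right] at hcs
  nlinarith [pow_lt_pow_left₀ hwa (norm_nonneg _) two_ne_zero,
    pow_lt_pow_left₀ hwb (norm_nonneg _) two_ne_zero,
    mul_le_mul_of_nonneg_left hsum' (norm_nonneg w)]

variable {ι : Type*} {c : ι → F}

theorem exists_hole_of_isPreconnected (hpack : Pairwise fun i j => 2 ≤ dist (c i) (c j))
    (hR : R ^ 2 ≤ 4 / 3) {i₀ : ι} {S : Set F} (hS : IsPreconnected S)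
    (hSR : S ⊆ sphere (c i₀) R) {p q : F} (hp : p ∈ S) (hq : q ∈ S) (hpq : R ≤ dist p q) :
    ∃ z ∈ S, ∀ i, R ≤ dist z (c i) := by
  by_contra! hcov
  have ne_center {z : F} (hz : z ∈ S) {i : ι} (hi : dist z (c i) < R) : i ≠ i₀ := by
    rintro rfl
    exact hi.ne (hSR hz)
  -- the balls `ball (c i) R` cover `S` and are pairwise disjoint on it, so the preconnected `S`
  -- lies in one of them, which then contains both ends of the chord `p q`
  have disj {z : F} (hz : z ∈ S) {i j : ι} (hij : i ≠ j) (hi : dist z (c i) < R)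
      (hj : dist z (c j) < R) : False :=
    false_of_three_separated_of_dist_le (p := z) hR (hpack hij) (hpack (ne_center hz hj))
      (hpack (ne_center hz hi).symm) (by rwa [dist_comm]) (by rw [dist_comm]; exact hj.le)
      (by rw [dist_comm, hSR hz])
  obtain ⟨k, hk⟩ := hcov p hp
  have hSk : S ⊆ ball (c k) R := by
    intro z hz
    obtain ⟨j, hj⟩ := hcov z hz
    by_cases hjk : j = k
    · exact mem_ball.2 (hjk ▸ hj)
    exfalso
    set V := ⋃ j ∈ {j | j ≠ k}, ball (c j) R
    have hcover : S ⊆ ball (c k) R ∪ V := by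
      intro w hw
      obtain ⟨l, hl⟩ := hcov w hw
      by_cases hlk : l = k
      · exact Or.inl (mem_ball.2 (hlk ▸ hl))
      · exact Or.inr (mem_iUnion₂.2 ⟨l, hlk, mem_ball.2 hl⟩)
    obtain ⟨w, hwS, hwk, hwV⟩ := hS _ V isOpen_ball (isOpen_biUnion fun _ _ => isOpen_ball)
      hcover ⟨p, hp, mem_ball.2 hk⟩ ⟨z, hz, mem_iUnion₂.2 ⟨j, hjk, mem_ball.2 hj⟩⟩
    obtain ⟨l, hlk, hwl⟩ := mem_iUnion₂.1 hwV
    exact disj hwS hlk (mem_ball.1 hwl) (mem_ball.1 hwk)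
  exact false_of_dist_lt_chord_endpoints hR (hSR hp) (hSR hq) hpq (hpack (ne_center hp hk))
    (by rw [dist_comm]; exact hSk hp) (by rw [dist_comm]; exact hSk hq)

end InnerProductSpace

lemma abs_add_le_of_mul_nonpos {u w t : ℝ} (huw : u * w ≤ 0) (hu : |u| ≤ t) (hw : |w| ≤ t) :
    |u + w| ≤ t := by
  rw [abs_le] at *
  constructor <;> nlinarith

lemma sin_add_pi_div_three_sub_sin (a : ℝ) : sin (a + π / 3) - sin a = cos (a + π / 6) := by
  obtain ⟨b, rfl⟩ : ∃ b, a = b - π / 6 := ⟨a + π / 6, by ring⟩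
  rw [show b - π / 6 + π / 3 = b + π / 6 by ring, sub_add_cancel, sin_add, sin_sub,
    sin_pi_div_six]
  ring

lemma exists_arc_sin_mem_Icc_of_neg_one_le {y : ℝ} (hy₁ : -1 ≤ y) (hy₂ : y ≤ 1 / 2) :
    ∃ a, ∀ θ ∈ Icc a (a + π / 3), sin θ ∈ Icc y (y + 1) ∧ 0 ≤ cos θ := by
  have ha₁ : -(π / 2) ≤ arcsin y := neg_pi_div_two_le_arcsin y
  have ha₂ : arcsin y ≤ π / 6 := by
    rw [arcsin_le_iff_le_sin ⟨hy₁, by linarith⟩ ⟨by linarith [pi_pos], by linarith [pi_pos]⟩,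
      sin_pi_div_six]
    exact hy₂
  refine ⟨arcsin y, fun θ ⟨hθ₁, hθ₂⟩ =>
    ⟨⟨?_, ?_⟩, cos_nonneg_of_neg_pi_div_two_le_of_le (by linarith) (by linarith)⟩⟩
  · calc y = sin (arcsin y) := (sin_arcsin hy₁ (by linarith)).symm
      _ ≤ sin θ := sin_le_sin_of_le_of_le_pi_div_two ha₁ (by linarith) hθ₁
  · calc sin θ ≤ sin (arcsin y + π / 3) :=
          sin_le_sin_of_le_of_le_pi_div_two (by linarith) (by linarith) hθ₂
      _ ≤ sin (arcsin y) + 1 := by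
          linarith [sin_add_pi_div_three_sub_sin (arcsin y), cos_le_one (arcsin y + π / 6)]
      _ = y + 1 := by rw [sin_arcsin hy₁ (by linarith)]

lemma exists_arc_sin_mem_Icc {y : ℝ} (hy₁ : -(3 / 2) ≤ y) (hy₂ : y ≤ 1 / 2) (u : ℝ) :
    ∃ a, ∀ θ ∈ Icc a (a + π / 3), sin θ ∈ Icc y (y + 1) ∧ u * cos θ ≤ 0 := by
  obtain ⟨a, ha⟩ : ∃ a, ∀ θ ∈ Icc a (a + π / 3), sin θ ∈ Icc y (y + 1) ∧ 0 ≤ cos θ := by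
    rcases le_or_gt (-1) y with hy | hy
    · exact exists_arc_sin_mem_Icc_of_neg_one_le hy hy₂
    obtain ⟨a, ha⟩ := exists_arc_sin_mem_Icc_of_neg_one_le (y := -y - 1) (by linarith)
      (by linarith)
    refine ⟨-(a + π / 3), fun θ hθ => ?_⟩
    obtain ⟨⟨h₁, h₂⟩, h₃⟩ := ha (-θ) ⟨by linarith [hθ.2], by linarith [hθ.1]⟩
    rw [sin_neg] at h₁ h₂
    rw [cos_neg] at h₃
    exact ⟨⟨by linarith, by linarith⟩, h₃⟩
  rcases le_or_gt u 0 with hu | hu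
  · exact ⟨a, fun θ hθ => ⟨(ha θ hθ).1, mul_nonpos_of_nonpos_of_nonneg hu (ha θ hθ).2⟩⟩
  refine ⟨π - (a + π / 3), fun θ hθ => ?_⟩
  obtain ⟨hsin, hcos⟩ := ha (π - θ) ⟨by linarith [hθ.2], by linarith [hθ.1]⟩
  rw [sin_pi_sub] at hsin
  rw [cos_pi_sub] at hcos
  exact ⟨hsin, by nlinarith⟩

@[simp] lemma pt_apply_zero (x y : ℝ) : pt x y 0 = x := rfl

@[simp] lemma pt_apply_one (x y : ℝ) : pt x y 1 = y := rfl

lemma dist_pt (x y : ℝ) (q : E2) : dist (pt x y) q = √((x - q 0) ^ 2 + (y - q 1) ^ 2) := by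
  simp [EuclideanSpace.dist_eq, Fin.sum_univ_two, Real.dist_eq, sq_abs]

lemma continuous_pt {f g : ℝ → ℝ} (hf : Continuous f) (hg : Continuous g) :
    Continuous fun t => pt (f t) (g t) :=
  (PiLp.continuous_toLp 2 _).comp (continuous_pi fun i => by fin_cases i <;> simpa)

def circlePt (x : E2) (R θ : ℝ) : E2 := pt (x 0 + R * cos θ) (x 1 + R * sin θ)

lemma continuous_circlePt (x : E2) (R : ℝ) : Continuous (circlePt x R) :=
  continuous_pt (by fun_prop) (by fun_prop)

lemma dist_circlePt_center (x : E2) {R : ℝ} (hR : 0 ≤ R) (θ : ℝ) :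
    dist (circlePt x R θ) x = R := by
  rw [circlePt, dist_pt]
  conv_rhs => rw [← sqrt_sq hR]
  congr 1
  linear_combination R ^ 2 * cos_sq_add_sin_sq θ

lemma dist_circlePt_add_pi_div_three (x : E2) {R : ℝ} (hR : 0 ≤ R) (θ : ℝ) :
    dist (circlePt x R θ) (circlePt x R (θ + π / 3)) = R := by
  rw [circlePt, dist_pt]
  conv_rhs => rw [← sqrt_sq hR]
  congr 1
  simp only [circlePt, pt_apply_zero, pt_apply_one, cos_add, sin_add, cos_pi_div_three,
    sin_pi_div_three]
  have h3 : √3 ^ 2 = 3 := sq_sqrt (by norm_num)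
  linear_combination R ^ 2 * cos_sq_add_sin_sq θ + R ^ 2 * (cos θ ^ 2 + sin θ ^ 2) / 4 * h3

section Packing

variable {ι : Type*} {c : ι → E2} {R : ℝ}

theorem exists_hole_on_arc (hpack : Pairwise fun i j => 2 ≤ dist (c i) (c j)) (hR₀ : 0 ≤ R)
    (hR : R ^ 2 ≤ 4 / 3) (i₀ : ι) (a : ℝ) :
    ∃ θ ∈ Icc a (a + π / 3), ∀ i, R ≤ dist (circlePt (c i₀) R θ) (c i) := by
  have hle : a ≤ a + π / 3 := by linarith [pi_pos]
  obtain ⟨_, ⟨θ, hθ, rfl⟩, hhole⟩ := exists_hole_of_isPreconnected hpack hR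
    (isPreconnected_Icc.image _ (continuous_circlePt _ _).continuousOn)
    (image_subset_iff.2 fun θ _ => dist_circlePt_center (c i₀) hR₀ θ)
    (mem_image_of_mem _ (left_mem_Icc.2 hle)) (mem_image_of_mem _ (right_mem_Icc.2 hle))
    (dist_circlePt_add_pi_div_three _ hR₀ a).ge
  exact ⟨θ, hθ, hhole⟩

theorem exists_hole_in_box (hpack : Pairwise fun i j => 2 ≤ dist (c i) (c j)) (hR₀ : 0 ≤ R)
    (hR : R ^ 2 ≤ 4 / 3) (m : E2) :
    ∃ q : E2, |q 0 - m 0| ≤ R ∧ |q 1 - m 1| ≤ R / 2 ∧ ∀ i, R ≤ dist q (c i) := by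
  by_cases hm : ∀ i, R ≤ dist m (c i)
  · exact ⟨m, by rwa [sub_self, abs_zero], by rw [sub_self, abs_zero]; positivity, hm⟩
  obtain ⟨i₀, hi₀⟩ := not_forall.1 hm
  rw [not_le] at hi₀
  set u := c i₀ 0 - m 0
  set v := c i₀ 1 - m 1
  have hu : |u| < R := by
    rw [abs_sub_comm]; exact (PiLp.dist_apply_le m (c i₀) 0).trans_lt hi₀
  have hv : |v| < R := by
    rw [abs_sub_comm]; exact (PiLp.dist_apply_le m (c i₀) 1).trans_lt hi₀
  have hRpos : 0 < R := (abs_nonneg u).trans_lt hu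
  have hvR : |v / R| ≤ 1 := by
    rw [abs_div, abs_of_pos hRpos, div_le_one hRpos]; exact hv.le
  rw [abs_le] at hvR
  obtain ⟨a, ha⟩ := exists_arc_sin_mem_Icc (y := -(1 / 2) - v / R) (by linarith) (by linarith) u
  obtain ⟨θ, hθ, hhole⟩ := exists_hole_on_arc hpack hR₀ hR i₀ a
  obtain ⟨⟨hsin₁, hsin₂⟩, hcos⟩ := ha θ hθ
  refine ⟨circlePt (c i₀) R θ, ?_, ?_, hhole⟩
  · have hRcos : |R * cos θ| ≤ R := by
      rw [abs_mul, abs_of_nonneg hR₀]; exact mul_le_of_le_one_right hR₀ (abs_cos_le_one θ)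
    simpa [circlePt, add_sub_right_comm] using
      abs_add_le_of_mul_nonpos (by nlinarith) hu.le hRcos
  · have hvR' : R * (v / R) = v := mul_div_cancel₀ v hRpos.ne'
    simp only [circlePt, pt_apply_one, add_sub_right_comm, abs_le]
    constructor <;> nlinarith

end Packing

lemma closedBall_subset_of_mem_Icc {q : E2} {r a b a' b' : ℝ} (h₀ : q 0 ∈ Icc (a + r) (b - r))
    (h₁ : q 1 ∈ Icc (a' + r) (b' - r)) :
    closedBall q r ⊆ {p : E2 | a ≤ p 0 ∧ p 0 ≤ b ∧ a' ≤ p 1 ∧ p 1 ≤ b'} := by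
  intro p hp
  have hp₀ := (PiLp.dist_apply_le p q 0).trans (mem_closedBall.1 hp)
  have hp₁ := (PiLp.dist_apply_le p q 1).trans (mem_closedBall.1 hp)
  rw [Real.dist_eq, abs_le] at hp₀ hp₁
  exact ⟨by linarith [h₀.1], by linarith [h₀.2], by linarith [h₁.1], by linarith [h₁.2]⟩

/-- In any packing of unit disks of the plane, the closed rectangle
`[0, 2+4r] × [0, 1+3r]` (`r = 2/√3 − 1`) contains a hole: a closed disk of radius `r`
disjoint from the interiors of all packing disks. -/
theorem stmt_15 (r : ℝ) (hr : r = 2 / Real.sqrt 3 - 1)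
    (ι : Type) (c : ι → E2)
    (hpack : Pairwise fun i j => 2 ≤ dist (c i) (c j)) :
    ∃ q : E2,
      Metric.closedBall q r ⊆
        {p : E2 | 0 ≤ p 0 ∧ p 0 ≤ 2 + 4 * r ∧ 0 ≤ p 1 ∧ p 1 ≤ 1 + 3 * r} ∧
      ∀ i, 1 + r ≤ dist q (c i) := by
  have hR : 1 + r = 2 / √3 := by rw [hr]; ring
  have hR₀ : 0 ≤ 1 + r := hR ▸ by positivity
  have hR_sq : (1 + r) ^ 2 ≤ 4 / 3 := by
    rw [hR, div_pow, sq_sqrt (by norm_num : (0 : ℝ) ≤ 3)]; norm_num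
  obtain ⟨q, h₀, h₁, hq⟩ := exists_hole_in_box hpack hR₀ hR_sq (pt (1 + 2 * r) ((1 + 3 * r) / 2))
  rw [pt_apply_zero, abs_le] at h₀
  rw [pt_apply_one, abs_le] at h₁
  exact ⟨q, closedBall_subset_of_mem_Icc ⟨by linarith, by linarith⟩ ⟨by linarith, by linarith⟩, hq⟩
end
end

section
/- Every configuration of at most 10 points in the plane can be covered by a translate of the standard hexagonal close packing of unit disks: for any points p₁, …, p₁₀ ∈ ℝ² there exists t ∈ ℝ² such that each pᵢ lies in some closed unit disk centered at a point of H + t, where H is the hexagonal lattice of minimum distance 2. -/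
/-
Translating the packing by `t` is the same as translating the points by `-t`, so it suffices to
find `t` in a fundamental domain `D` of the lattice `H` that lies, for every `i`, in the open set
`p i + H + B(0,1)`. Since the unit disks around lattice points are disjoint, each of these sets
meets `D` in area `π`, so its complement in `D` (a translated interstitium) has area
`2√3 - π = area D - π`. Ten such complements have total area less than `area D`, so they miss a
point of `D`.
-/

noncomputable section

/-- The hexagonal lattice with minimum distance `d`, generated by `(d,0)` and `(d/2, √3·d/2)`. -/
def hexLattice (d : ℝ) : Set E2 :=
  {p | ∃ m n : ℤ, p = (m : ℝ) • pt d 0 + (n : ℝ) • pt (d / 2) (Real.sqrt 3 * d / 2)}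

open Function MeasureTheory Metric Submodule ENNReal Pointwise

theorem MeasureTheory.exists_mem_forall_mem_of_sum_measure_diff_lt {α ι : Type*}
    [MeasurableSpace α] [Fintype ι] {μ : Measure α} {D : Set α} {U : ι → Set α}
    (h : ∑ i, μ (D \ U i) < μ D) : ∃ t ∈ D, ∀ i, t ∈ U i := by
  by_contra! hD
  have hcover : D ⊆ ⋃ i, D \ U i := fun t ht => by
    obtain ⟨i, hi⟩ := hD t ht
    exact Set.mem_iUnion.2 ⟨i, ht, hi⟩
  exact (measure_mono hcover |>.trans (measure_iUnion_fintype_le μ _)).not_gt h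

namespace MeasureTheory.IsAddFundamentalDomain

variable {G α : Type*} [AddGroup G] [Countable G] [AddAction G α] [MeasurableSpace α]
  [MeasurableConstVAdd G α] {μ : Measure α} [VAddInvariantMeasure G α μ] {D : Set α}

theorem measure_inter_iUnion_vadd (hD : IsAddFundamentalDomain G D μ) {s : Set α}
    (hs : MeasurableSet s) (hdisj : Pairwise (Disjoint on fun g : G => g +ᵥ s)) :
    μ (D ∩ ⋃ g : G, g +ᵥ s) = μ s := by
  rw [hD.measure_eq_tsum s, Set.inter_iUnion, measure_iUnion₀]
  · simp only [Set.inter_comm D]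
  · exact fun g h hgh =>
      ((hdisj hgh).mono Set.inter_subset_right Set.inter_subset_right).aedisjoint
  · exact fun g => hD.nullMeasurableSet.inter (hs.const_vadd g).nullMeasurableSet

theorem exists_forall_mem_iUnion_vadd {ι : Type*} [Fintype ι] (hD : IsAddFundamentalDomain G D μ)
    {s : ι → Set α} (hs : ∀ i, MeasurableSet (s i)) (hs_fin : ∀ i, μ (s i) ≠ ∞)
    (hdisj : ∀ i, Pairwise (Disjoint on fun g : G => g +ᵥ s i))
    (hlt : ∑ i, (μ D - μ (s i)) < μ D) : ∃ t, ∀ i, ∃ g : G, t ∈ g +ᵥ s i := by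
  have hdiff (i : ι) : μ (D \ ⋃ g : G, g +ᵥ s i) ≤ μ D - μ (s i) := by
    refine ENNReal.le_sub_of_add_le_left (hs_fin i) (Eq.le ?_)
    rw [← hD.measure_inter_iUnion_vadd (hs i) (hdisj i)]
    exact measure_inter_add_sdiff _ (MeasurableSet.iUnion fun g => (hs i).const_vadd g)
  obtain ⟨t, -, ht⟩ := exists_mem_forall_mem_of_sum_measure_diff_lt
    ((Finset.sum_le_sum fun i _ => hdiff i).trans_lt hlt)
  exact ⟨t, fun i => Set.mem_iUnion.1 (ht i)⟩

end MeasureTheory.IsAddFundamentalDomain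

namespace AddSubgroup

theorem pairwise_disjoint_vadd_ball {E : Type*} [SeminormedAddCommGroup E]
    (L : AddSubgroup E) {r : ℝ} (hL : ∀ v ∈ L, v ≠ 0 → 2 * r ≤ ‖v‖) (c : E) :
    Pairwise (Disjoint on fun g : L => g +ᵥ ball c r) := by
  intro g h hgh
  simp only [onFun, vadd_def, vadd_ball'', vadd_eq_add]
  apply ball_disjoint_ball
  rw [dist_add_right, dist_eq_norm, ← two_mul]
  exact hL _ (sub_mem g.2 h.2) (sub_ne_zero.2 (Subtype.coe_injective.ne hgh))

theorem exists_forall_dist_lt_of_card_smul_lt {E ι : Type*} [NormedAddCommGroup E]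
    [ProperSpace E] [MeasurableSpace E] [BorelSpace E] {μ : Measure E} [μ.IsAddHaarMeasure]
    [Fintype ι] (L : AddSubgroup E) [Countable L] {D : Set E} (hD : IsAddFundamentalDomain L D μ)
    {r : ℝ} (hL : ∀ v ∈ L, v ≠ 0 → 2 * r ≤ ‖v‖)
    (hlt : Fintype.card ι • (μ D - μ (ball 0 r)) < μ D) (p : ι → E) :
    ∃ t, ∀ i, ∃ q ∈ L, dist (p i) (q + t) < r := by
  obtain ⟨t, ht⟩ := hD.exists_forall_mem_iUnion_vadd (s := fun i => ball (p i) r)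
    (fun _ => measurableSet_ball) (fun _ => measure_ball_lt_top.ne)
    (fun i => L.pairwise_disjoint_vadd_ball hL (p i))
    (by simpa only [Measure.addHaar_ball_center μ, Finset.sum_const, Finset.card_univ] using hlt)
  refine ⟨t, fun i => ?_⟩
  obtain ⟨g, hg⟩ := ht i
  refine ⟨-g, neg_mem g.2, ?_⟩
  rwa [vadd_def, vadd_ball'', mem_ball, vadd_eq_add, dist_comm, ← dist_add_left (-(g : E)),
    neg_add_cancel_left] at hg

end AddSubgroup

instance ZSpan.countable_toAddSubgroup {E ι : Type*} [NormedAddCommGroup E] [NormedSpace ℝ E]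
    [Finite ι] (b : Module.Basis ι ℝ E) : Countable (span ℤ (Set.range b)).toAddSubgroup :=
  inferInstanceAs (Countable (span ℤ (Set.range b)))

theorem EuclideanSpace.volume_fundamentalDomain {ι : Type*} [Fintype ι] [DecidableEq ι]
    (b : Module.Basis ι ℝ (EuclideanSpace ℝ ι)) :
    volume (ZSpan.fundamentalDomain b) =
      ENNReal.ofReal |(EuclideanSpace.basisFun ι ℝ).toBasis.det b| := by
  rw [measure_congr (ZSpan.fundamentalDomain_ae_parallelepiped b volume),
    ← (EuclideanSpace.basisFun ι ℝ).addHaar_eq_volume, Measure.addHaar_parallelepiped]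

theorem Int.one_le_sq_add_mul_add_sq {m n : ℤ} (h : m ≠ 0 ∨ n ≠ 0) :
    1 ≤ m ^ 2 + m * n + n ^ 2 := by
  rcases h with hm | hn
  · nlinarith [sq_nonneg (m + 2 * n), sq_pos_of_ne_zero hm]
  · nlinarith [sq_nonneg (2 * m + n), sq_pos_of_ne_zero hn]

lemma norm_sq_pt (x y : ℝ) : ‖pt x y‖ ^ 2 = x ^ 2 + y ^ 2 := by
  simp [pt, EuclideanSpace.norm_sq_eq, Fin.sum_univ_two]

lemma smul_add_smul_hex (d a b : ℝ) :
    a • pt d 0 + b • pt (d / 2) (√3 * d / 2) = pt (d * (a + b / 2)) (√3 / 2 * d * b) := by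
  ext i; fin_cases i <;> simp [pt] <;> ring

lemma norm_sq_smul_add_smul_hex (d a b : ℝ) :
    ‖a • pt d 0 + b • pt (d / 2) (√3 * d / 2)‖ ^ 2 = d ^ 2 * (a ^ 2 + a * b + b ^ 2) := by
  rw [smul_add_smul_hex, norm_sq_pt]
  nlinarith [Real.sq_sqrt (show (0 : ℝ) ≤ 3 by norm_num)]

lemma abs_le_norm_of_mem_hexLattice {d : ℝ} {v : E2} (hv : v ∈ hexLattice d) (h0 : v ≠ 0) :
    |d| ≤ ‖v‖ := by
  obtain ⟨m, n, rfl⟩ := hv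
  have hmn : m ≠ 0 ∨ n ≠ 0 := by
    by_contra! h
    simp [h.1, h.2] at h0
  have hform : (1 : ℝ) ≤ m ^ 2 + m * n + n ^ 2 := by
    exact_mod_cast Int.one_le_sq_add_mul_add_sq hmn
  rw [← abs_norm, ← sq_le_sq, norm_sq_smul_add_smul_hex]
  nlinarith [sq_nonneg d]

def hexGen (d : ℝ) : Fin 2 → E2 := ![pt d 0, pt (d / 2) (√3 * d / 2)]

lemma linearIndependent_hexGen {d : ℝ} (hd : d ≠ 0) : LinearIndependent ℝ (hexGen d) := by
  rw [hexGen, LinearIndependent.pair_iff]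
  intro a b hab
  have h : a ^ 2 + a * b + b ^ 2 = 0 := by
    simpa [hab, hd] using norm_sq_smul_add_smul_hex d a b
  constructor <;> nlinarith [sq_nonneg (2 * a + b), sq_nonneg (a + 2 * b)]

section hexBasis

variable {d : ℝ} (hd : d ≠ 0)

def hexBasis : Module.Basis (Fin 2) ℝ E2 :=
  basisOfLinearIndependentOfCardEqFinrank (linearIndependent_hexGen hd) (by simp)

lemma coe_hexBasis : ⇑(hexBasis hd) = hexGen d :=
  coe_basisOfLinearIndependentOfCardEqFinrank _ _

abbrev hexSubgroup : AddSubgroup E2 := (span ℤ (Set.range (hexBasis hd))).toAddSubgroup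

lemma mem_hexSubgroup {v : E2} : v ∈ hexSubgroup hd ↔ v ∈ hexLattice d := by
  rw [mem_toAddSubgroup, ← SetLike.mem_coe, coe_hexBasis, hexGen, Matrix.range_cons_cons_empty,
    SetLike.mem_coe, mem_span_pair]
  simp only [hexLattice, Set.mem_ofPred_eq, ← Int.cast_smul_eq_zsmul ℝ, eq_comm]

lemma volume_fundamentalDomain_hexBasis :
    volume (ZSpan.fundamentalDomain (hexBasis hd)) = ENNReal.ofReal (√3 / 2 * d ^ 2) := by
  rw [EuclideanSpace.volume_fundamentalDomain, Module.Basis.det_apply, Matrix.det_fin_two]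
  congr 1
  simp only [coe_hexBasis, hexGen, pt, Module.Basis.toMatrix_apply, Matrix.cons_val_zero,
    OrthonormalBasis.coe_toBasis_repr_apply, EuclideanSpace.basisFun_repr, Matrix.cons_val_one,
    Matrix.cons_val_fin_one, mul_zero, sub_zero]
  rw [show d * (√3 * d / 2) = √3 / 2 * d ^ 2 by ring, abs_of_nonneg (by positivity)]

end hexBasis

lemma ten_mul_sub_pi_lt : 10 * (2 * √3 - Real.pi) < 2 * √3 := by
  have hsqrt : √3 < 1.7321 := by
    rw [Real.sqrt_lt' (by norm_num)]; norm_num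
  linarith [Real.pi_gt_d2]

lemma ten_smul_interstitium_lt :
    10 • (volume (ZSpan.fundamentalDomain (hexBasis two_ne_zero)) - volume (ball (0 : E2) 1)) <
      volume (ZSpan.fundamentalDomain (hexBasis two_ne_zero)) := by
  rw [volume_fundamentalDomain_hexBasis, EuclideanSpace.volume_ball_fin_two, ENNReal.ofReal_one,
    one_pow, one_mul, show √3 / 2 * 2 ^ 2 = 2 * √3 by ring, ← ENNReal.ofReal_sub _ Real.pi_pos.le,
    nsmul_eq_mul, ← ENNReal.ofReal_natCast, ← ENNReal.ofReal_mul (by positivity),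
    ENNReal.ofReal_lt_ofReal_iff (by positivity)]
  exact_mod_cast ten_mul_sub_pi_lt

/-- Any 10 points in the plane can be covered by a translate of the hexagonal close packing
of unit disks: there is a translation `t` such that each point lies in a closed unit disk
centered at a point of `H + t`. -/
theorem stmt_17 (p : Fin 10 → E2) :
    ∃ t : E2, ∀ i, ∃ q ∈ hexLattice 2, dist (p i) (q + t) ≤ 1 := by
  have hpacking (v : E2) (hv : v ∈ hexSubgroup two_ne_zero) (h0 : v ≠ 0) : 2 * 1 ≤ ‖v‖ := by
    simpa using abs_le_norm_of_mem_hexLattice ((mem_hexSubgroup two_ne_zero).1 hv) h0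
  obtain ⟨t, ht⟩ := (hexSubgroup two_ne_zero).exists_forall_dist_lt_of_card_smul_lt
    (ZSpan.isAddFundamentalDomain' _ volume) hpacking
    (by rw [Fintype.card_fin]; exact ten_smul_interstitium_lt) p
  exact ⟨t, fun i => (ht i).imp fun q ⟨hq, hdist⟩ => ⟨(mem_hexSubgroup _).1 hq, hdist.le⟩⟩
end
end
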